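/- arXiv:2411.07562 — 4 statements merged into one kernel-verified Lean document; each statement's English description precedes it below -/
import Mathlib

section
/- Let η⁺, η⁻, s ∈ ℝ with s ∈ {−1, 0, 1}, and define η̂ = {η} + β⟦η⟧ s where β ≥ 0, ⟦η⟧ = η⁺ − η⁻, {η} = (η⁺+η⁻)/2. Then for any real f with sign(f) = s, −⟦η η̂ − η²/2⟧ · f = −β ⟦η⟧² s f ≤ 0. -/
/-- Upwinded tracer numerical flux dissipates tracer variance at an interface:
with η̂ = {η} + β⟦η⟧s, s = sign(f) ∈ {-1,0,1}, the jump of ηη̂ − η²/2 against f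
equals −β⟦η⟧²sf and is nonpositive. -/
theorem tracer_variance_flux_dissipation (ηp ηm s β f : ℝ)
    (hs : s ∈ ({-1, 0, 1} : Set ℝ)) (hβ : 0 ≤ β) (hsign : Real.sign f = s) :
    -(((ηp * (((ηp + ηm) / 2) + β * (ηp - ηm) * s) - ηp ^ 2 / 2)
      - (ηm * (((ηp + ηm) / 2) + β * (ηp - ηm) * s) - ηm ^ 2 / 2)) * f)
      = -(β * (ηp - ηm) ^ 2 * s * f)
    ∧ -(β * (ηp - ηm) ^ 2 * s * f) ≤ 0 := by
  constructor
  · ring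
  · have hsf : 0 ≤ s * f := by
      subst hsign
      rcases lt_trichotomy f 0 with h | h | h
      · rw [Real.sign_of_neg h]; nlinarith
      · simp [h]
      · rw [Real.sign_of_pos h]; nlinarith
    have : 0 ≤ β * (ηp - ηm) ^ 2 * (s * f) := by positivity
    nlinarith
end

section
/- Let G⁺, G⁻, F⁺, F⁻ ∈ ℝ, α ≥ 0, and define Ĝ = {G} + α⟦F⟧ and F̂ = {F}. Then −⟦G F̂ + Ĝ F − G F⟧ = −α ⟦F⟧² ≤ 0. -/
/-- Penalized Bernoulli flux Ĝ = {G} + α⟦F⟧, F̂ = {F}: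
−⟦GF̂ + ĜF − GF⟧ = −α⟦F⟧² ≤ 0 when α ≥ 0. -/
theorem penalized_bernoulli_flux_dissipation (Gp Gm Fp Fm α : ℝ) (hα : 0 ≤ α) :
    -((Gp * ((Fp + Fm) / 2) + (((Gp + Gm) / 2) + α * (Fp - Fm)) * Fp - Gp * Fp)
      - (Gm * ((Fp + Fm) / 2) + (((Gp + Gm) / 2) + α * (Fp - Fm)) * Fm - Gm * Fm))
      = -(α * (Fp - Fm) ^ 2)
    ∧ -(α * (Fp - Fm) ^ 2) ≤ 0 := by
  exact ⟨by ring, neg_nonpos.mpr (mul_nonneg hα (sq_nonneg _))⟩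
end

section
/- Suppose u : ℝ⁺ × ℝ × ℝ → ℝ is a differentiable specific internal energy with ∂u/∂ρ = p/ρ², ∂u/∂η = T, ∂u/∂q = μ (all evaluated at (ρ, η, q)). Then for differentiable fields ρ, η, q : ℝ² → ℝ with ρ > 0, the pressure gradient satisfies (1/ρ)∇p = ∇(h − Tη − qμ) + η∇T + q∇μ pointwise, where h = u + p/ρ and p, T, μ are composed with the fields. -/
open scoped RealInnerProductSpace

/-- Thermodynamically consistent rewriting of the pressure gradient:
if ∂u/∂ρ = p/ρ², ∂u/∂η = T, ∂u/∂q = μ, then for fields ρ, η, q on ℝ² with ρ > 0,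
(1/ρ)∇p = ∇(h − Tη − qμ) + η∇T + q∇μ, where h = u + p/ρ. -/
theorem pressure_gradient_identity
    (u p T μ : ℝ → ℝ → ℝ → ℝ)
    (hu : ContDiff ℝ (⊤ : ℕ∞) (fun z : ℝ × ℝ × ℝ => u z.1 z.2.1 z.2.2))
    (hp : ∀ r η q : ℝ, 0 < r →
      HasDerivAt (fun s => u s η q) (p r η q / r ^ 2) r)
    (hT : ∀ r η q : ℝ, 0 < r →
      HasDerivAt (fun s => u r s q) (T r η q) η)
    (hμ : ∀ r η q : ℝ, 0 < r →
      HasDerivAt (fun s => u r η s) (μ r η q) q)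
    (ρ η q : EuclideanSpace ℝ (Fin 2) → ℝ)
    (hρ : Differentiable ℝ ρ) (hη : Differentiable ℝ η) (hq : Differentiable ℝ q)
    (hρpos : ∀ x, 0 < ρ x) (x : EuclideanSpace ℝ (Fin 2)) :
    (1 / ρ x) • gradient (fun y => p (ρ y) (η y) (q y)) x
      = gradient (fun y =>
            (u (ρ y) (η y) (q y) + p (ρ y) (η y) (q y) / ρ y)
              - T (ρ y) (η y) (q y) * η y - q y * μ (ρ y) (η y) (q y)) x
        + η x • gradient (fun y => T (ρ y) (η y) (q y)) x
        + q x • gradient (fun y => μ (ρ y) (η y) (q y)) x := by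
  classical
  have hne : ρ x ≠ 0 := (hρpos x).ne'
  set U : ℝ × ℝ × ℝ → ℝ := fun z => u z.1 z.2.1 z.2.2 with hUdef
  have hUdiff : Differentiable ℝ U := hu.differentiable (by simp)
  have key₁ : ∀ z : ℝ × ℝ × ℝ, 0 < z.1 →
      fderiv ℝ U z (1, 0, 0) = p z.1 z.2.1 z.2.2 / z.1 ^ 2 := by
    rintro ⟨r, s, t⟩ hr
    have hline : HasDerivAt (fun a : ℝ => ((a, s, t) : ℝ × ℝ × ℝ)) (1, 0, 0) r :=
      (hasDerivAt_id r).prodMk (hasDerivAt_const r (s, t))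
    have h1 : HasDerivAt (fun a : ℝ => U (a, s, t)) (fderiv ℝ U (r, s, t) (1, 0, 0)) r :=
      ((hUdiff (r, s, t)).hasFDerivAt.comp_hasDerivAt r hline :)
    exact h1.unique (hp r s t hr)
  have key₂ : ∀ z : ℝ × ℝ × ℝ, 0 < z.1 →
      fderiv ℝ U z (0, 1, 0) = T z.1 z.2.1 z.2.2 := by
    rintro ⟨r, s, t⟩ hr
    have hline : HasDerivAt (fun a : ℝ => ((r, a, t) : ℝ × ℝ × ℝ)) (0, 1, 0) s :=
      (hasDerivAt_const s r).prodMk ((hasDerivAt_id s).prodMk (hasDerivAt_const s t))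
    have h1 : HasDerivAt (fun a : ℝ => U (r, a, t)) (fderiv ℝ U (r, s, t) (0, 1, 0)) s :=
      ((hUdiff (r, s, t)).hasFDerivAt.comp_hasDerivAt s hline :)
    exact h1.unique (hT r s t hr)
  have key₃ : ∀ z : ℝ × ℝ × ℝ, 0 < z.1 →
      fderiv ℝ U z (0, 0, 1) = μ z.1 z.2.1 z.2.2 := by
    rintro ⟨r, s, t⟩ hr
    have hline : HasDerivAt (fun a : ℝ => ((r, s, a) : ℝ × ℝ × ℝ)) (0, 0, 1) t :=
      (hasDerivAt_const t r).prodMk ((hasDerivAt_const t s).prodMk (hasDerivAt_id t))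
    have h1 : HasDerivAt (fun a : ℝ => U (r, s, a)) (fderiv ℝ U (r, s, t) (0, 0, 1)) t :=
      ((hUdiff (r, s, t)).hasFDerivAt.comp_hasDerivAt t hline :)
    exact h1.unique (hμ r s t hr)
  set F : EuclideanSpace ℝ (Fin 2) → ℝ × ℝ × ℝ := fun y => (ρ y, η y, q y) with hFdef
  have hFd : ∀ y, HasFDerivAt F
      ((fderiv ℝ ρ y).prod ((fderiv ℝ η y).prod (fderiv ℝ q y))) y :=
    fun y => (hρ y).hasFDerivAt.prodMk ((hη y).hasFDerivAt.prodMk (hq y).hasFDerivAt)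
  have hFdiff : Differentiable ℝ F := fun y => (hFd y).differentiableAt
  have hG : ContDiff ℝ (⊤ : ℕ∞) (fun z => fderiv ℝ U z) := hu.fderiv_right (mod_cast le_top)
  have hGe : ∀ v : ℝ × ℝ × ℝ, Differentiable ℝ (fun y => fderiv ℝ U (F y) v) :=
    fun v => (((hG.clm_apply contDiff_const).differentiable (by simp)).comp hFdiff :)
  have hPeq : (fun y => p (ρ y) (η y) (q y))
      = fun y => (ρ y) ^ 2 * fderiv ℝ U (F y) (1, 0, 0) := by
    funext y
    rw [key₁ (F y) (hρpos y)]
    show p (ρ y) (η y) (q y) = ρ y ^ 2 * (p (ρ y) (η y) (q y) / ρ y ^ 2)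
    field_simp [(hρpos y).ne']
  have hPdiff : Differentiable ℝ (fun y => p (ρ y) (η y) (q y)) := by
    rw [hPeq]; exact (hρ.pow 2).mul (hGe _)
  have hTeq : (fun y => T (ρ y) (η y) (q y)) = fun y => fderiv ℝ U (F y) (0, 1, 0) := by
    funext y; rw [key₂ (F y) (hρpos y)]
  have hTdiff : Differentiable ℝ (fun y => T (ρ y) (η y) (q y)) := by
    rw [hTeq]; exact hGe _
  have hMeq : (fun y => μ (ρ y) (η y) (q y)) = fun y => fderiv ℝ U (F y) (0, 0, 1) := by
    funext y; rw [key₃ (F y) (hρpos y)]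
  have hMdiff : Differentiable ℝ (fun y => μ (ρ y) (η y) (q y)) := by
    rw [hMeq]; exact hGe _
  have hUFx : HasFDerivAt (fun y => u (ρ y) (η y) (q y))
      ((fderiv ℝ U (F x)).comp
        ((fderiv ℝ ρ x).prod ((fderiv ℝ η x).prod (fderiv ℝ q x)))) x :=
    (hUdiff (F x)).hasFDerivAt.comp x (hFd x)
  have hPx := (hPdiff x).hasFDerivAt
  have hTx := (hTdiff x).hasFDerivAt
  have hMx := (hMdiff x).hasFDerivAt
  have hinv : HasFDerivAt (fun y => (ρ y)⁻¹) ((-(ρ x ^ 2)⁻¹) • fderiv ℝ ρ x) x :=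
    (hasDerivAt_inv hne).comp_hasFDerivAt x (hρ x).hasFDerivAt
  have hdivq : HasFDerivAt (fun y => p (ρ y) (η y) (q y) / ρ y)
      ((p (ρ x) (η x) (q x)) • ((-(ρ x ^ 2)⁻¹) • fderiv ℝ ρ x)
        + (ρ x)⁻¹ • fderiv ℝ (fun y => p (ρ y) (η y) (q y)) x) x := by
    simpa only [div_eq_mul_inv] using hPx.fun_mul hinv
  have hbig := ((hUFx.fun_add hdivq).fun_sub
      (hTx.fun_mul (hη x).hasFDerivAt)).fun_sub ((hq x).hasFDerivAt.fun_mul hMx)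
  have hfid : (1 / ρ x) • fderiv ℝ (fun y => p (ρ y) (η y) (q y)) x
      = fderiv ℝ (fun y =>
            (u (ρ y) (η y) (q y) + p (ρ y) (η y) (q y) / ρ y)
              - T (ρ y) (η y) (q y) * η y - q y * μ (ρ y) (η y) (q y)) x
        + η x • fderiv ℝ (fun y => T (ρ y) (η y) (q y)) x
        + q x • fderiv ℝ (fun y => μ (ρ y) (η y) (q y)) x := by
    rw [hbig.fderiv]
    ext v
    have hdecomp : (fderiv ℝ U (F x))
        (fderiv ℝ ρ x v, fderiv ℝ η x v, fderiv ℝ q x v)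
        = fderiv ℝ ρ x v * (p (ρ x) (η x) (q x) / (ρ x) ^ 2)
          + fderiv ℝ η x v * T (ρ x) (η x) (q x)
          + fderiv ℝ q x v * μ (ρ x) (η x) (q x) := by
      have hv : ((fderiv ℝ ρ x v, fderiv ℝ η x v, fderiv ℝ q x v) : ℝ × ℝ × ℝ)
          = fderiv ℝ ρ x v • ((1 : ℝ), (0 : ℝ), (0 : ℝ))
            + fderiv ℝ η x v • ((0 : ℝ), (1 : ℝ), (0 : ℝ))
            + fderiv ℝ q x v • ((0 : ℝ), (0 : ℝ), (1 : ℝ)) := by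
        simp [Prod.ext_iff]
      rw [hv, map_add, map_add, map_smul, map_smul, map_smul,
        key₁ (F x) (hρpos x), key₂ (F x) (hρpos x), key₃ (F x) (hρpos x)]
      simp [smul_eq_mul]
      rfl
    simp only [ContinuousLinearMap.add_apply, ContinuousLinearMap.smul_apply,
      ContinuousLinearMap.sub_apply, ContinuousLinearMap.comp_apply,
      ContinuousLinearMap.prod_apply, smul_eq_mul, ContinuousLinearMap.coe_smul',
      Pi.smul_apply]
    rw [hdecomp]
    field_simp
    ring
  show (1 / ρ x) • (InnerProductSpace.toDual ℝ _).symm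
        (fderiv ℝ (fun y => p (ρ y) (η y) (q y)) x)
      = (InnerProductSpace.toDual ℝ _).symm (fderiv ℝ _ x)
        + η x • (InnerProductSpace.toDual ℝ _).symm
            (fderiv ℝ (fun y => T (ρ y) (η y) (q y)) x)
        + q x • (InnerProductSpace.toDual ℝ _).symm
            (fderiv ℝ (fun y => μ (ρ y) (η y) (q y)) x)
  rw [← map_smul, ← map_smul, ← map_smul, ← map_add, ← map_add, hfid]
end

section
/- Let w, D be a 1D SBP pair (WD + DᵀW = B with B = diag(−1,0,…,0,1)) and γ, F : Fin (p+1) → ℝ grid functions. Then the split advection operator A_i := (1/2)[(D(γ∘F))_i + γ_i (DF)_i + F_i (Dγ)_i] satisfies ∑_i w_i A_i = γ_p F_p − γ_0 F_0. -/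
open Finset

lemma sac_Bsum (p : ℕ) (u : Fin (p + 1) → ℝ) :
    ∑ i, ∑ j, ((if i = Fin.last p ∧ j = Fin.last p then (1 : ℝ) else 0)
        - (if i = 0 ∧ j = 0 then (1 : ℝ) else 0)) * u j
      = u (Fin.last p) - u 0 := by
  simp [sub_mul, Finset.sum_sub_distrib, ite_and, ite_mul]

/-- Split-form advection tested against 1 gives the boundary tracer flux:
∑ wᵢAᵢ = γₚFₚ − γ₀F₀ where A = ½(D(γF) + γ DF + F Dγ). -/
theorem split_advection_tracer_conservation (p : ℕ) (w : Fin (p + 1) → ℝ)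
    (D : Matrix (Fin (p + 1)) (Fin (p + 1)) ℝ)
    (hw : ∀ i, 0 < w i)
    (hD1 : D.mulVec (fun _ => (1 : ℝ)) = fun _ => 0)
    (hsbp : ∀ i j, w i * D i j + w j * D j i =
      (if i = Fin.last p ∧ j = Fin.last p then (1 : ℝ) else 0)
        - (if i = 0 ∧ j = 0 then (1 : ℝ) else 0))
    (γ F : Fin (p + 1) → ℝ) :
    ∑ i, w i *
        ((1 / 2) * (D.mulVec (fun j => γ j * F j) i + γ i * D.mulVec F i
          + F i * D.mulVec γ i))
      = γ (Fin.last p) * F (Fin.last p) - γ 0 * F 0 := by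
  have hrow : ∀ i, ∑ j, D i j = 0 := by
    intro i
    have := congrFun hD1 i
    simpa [Matrix.mulVec, dotProduct] using this
  -- key identity: ∑ i, w i * (D u)_i = u_p - u_0
  have key : ∀ u : Fin (p + 1) → ℝ,
      ∑ i, ∑ j, w i * D i j * u j = u (Fin.last p) - u 0 := by
    intro u
    have h1 : ∑ i, ∑ j, w i * D i j * u j
        = ∑ i, ∑ j, (((if i = Fin.last p ∧ j = Fin.last p then (1 : ℝ) else 0)
            - (if i = 0 ∧ j = 0 then (1 : ℝ) else 0)) - w j * D j i) * u j := by
      refine Finset.sum_congr rfl fun i _ => Finset.sum_congr rfl fun j _ => ?_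
      have h := hsbp i j
      have : w i * D i j = ((if i = Fin.last p ∧ j = Fin.last p then (1 : ℝ) else 0)
          - (if i = 0 ∧ j = 0 then (1 : ℝ) else 0)) - w j * D j i := by linarith
      rw [this]
    have h2 : ∑ i, ∑ j, w j * D j i * u j = 0 := by
      rw [Finset.sum_comm]
      refine Finset.sum_eq_zero fun j _ => ?_
      have : ∑ i, w j * D j i * u j = (w j * u j) * ∑ i, D j i := by
        rw [Finset.mul_sum]; exact Finset.sum_congr rfl fun i _ => by ring
      rw [this, hrow, mul_zero]
    calc ∑ i, ∑ j, w i * D i j * u j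
        = ∑ i, ∑ j, (((if i = Fin.last p ∧ j = Fin.last p then (1 : ℝ) else 0)
            - (if i = 0 ∧ j = 0 then (1 : ℝ) else 0)) * u j - w j * D j i * u j) := by
          rw [h1]; exact Finset.sum_congr rfl fun i _ => Finset.sum_congr rfl fun j _ => by ring
      _ = (∑ i, ∑ j, ((if i = Fin.last p ∧ j = Fin.last p then (1 : ℝ) else 0)
            - (if i = 0 ∧ j = 0 then (1 : ℝ) else 0)) * u j)
          - ∑ i, ∑ j, w j * D j i * u j := by
          simp [Finset.sum_sub_distrib]
      _ = u (Fin.last p) - u 0 := by rw [h2, sac_Bsum]; ring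
  -- the symmetric part
  set S : ℝ := ∑ i, ∑ j, w i * D i j * (γ i * F j + F i * γ j) with hS
  have hswap : S = ∑ i, ∑ j, w j * D j i * (γ j * F i + F j * γ i) := by
    rw [hS, Finset.sum_comm]
  have h2S : S + S = 2 * (γ (Fin.last p) * F (Fin.last p)) - 2 * (γ 0 * F 0) := by
    have : S + S = ∑ i, ∑ j, ((if i = Fin.last p ∧ j = Fin.last p then (1 : ℝ) else 0)
        - (if i = 0 ∧ j = 0 then (1 : ℝ) else 0)) * (γ i * F j + F i * γ j) := by
      nth_rewrite 2 [hswap]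
      rw [hS, ← Finset.sum_add_distrib]
      refine Finset.sum_congr rfl fun i _ => ?_
      rw [← Finset.sum_add_distrib]
      refine Finset.sum_congr rfl fun j _ => ?_
      have h := hsbp i j
      linear_combination (γ i * F j + F i * γ j) * h
    rw [this]
    simp [sub_mul, Finset.sum_sub_distrib, ite_and, ite_mul]
    ring
  -- expand LHS
  have expand : ∑ i, w i *
        ((1 / 2) * (D.mulVec (fun j => γ j * F j) i + γ i * D.mulVec F i
          + F i * D.mulVec γ i))
      = (1 / 2) * ((∑ i, ∑ j, w i * D i j * (γ j * F j)) + S) := by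
    rw [hS, ← Finset.sum_add_distrib, Finset.mul_sum]
    refine Finset.sum_congr rfl fun i _ => ?_
    simp only [Matrix.mulVec, dotProduct, Finset.mul_sum, ← Finset.sum_add_distrib]
    exact Finset.sum_congr rfl fun j _ => by ring
  rw [expand, key (fun j => γ j * F j)]
  have hSval : S = γ (Fin.last p) * F (Fin.last p) - γ 0 * F 0 := by linarith
  rw [hSval]; ring
end
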